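/- Let W be a finite type with decidable equality and let G be a simple graph on W × Fin 2 with at least one edge whose graph Laplacian state ρ_G satisfies ρ_G (u,a) (w,b) = ρ_G (u,b) (w,a) for all u, w : W and a, b : Fin 2 (i.e., ρ_G equals its partial transpose over the Fin 2 factor). Then ρ_G is separable (as a state on ℂ^W ⊗ ℂ²). -/

import Mathlib

open Matrix Kronecker ComplexOrder

noncomputable section

/-- A density matrix: positive semidefinite with trace 1. -/
def IsDensityMatrix {n : Type*} [Fintype n] (ρ : Matrix n n ℂ) : Prop :=
  ρ.PosSemidef ∧ ρ.trace = 1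

/-- Separability of a bipartite density matrix: a convex combination of Kronecker
products of density matrices of the subsystems. -/
def Separable {α β : Type*} [Fintype α] [Fintype β]
    (ρ : Matrix (α × β) (α × β) ℂ) : Prop :=
  ∃ (n : ℕ) (p : Fin n → ℝ) (σ : Fin n → Matrix α α ℂ) (τ : Fin n → Matrix β β ℂ),
    (∀ k, 0 ≤ p k) ∧ (∑ k, p k = 1) ∧
    (∀ k, (σ k).PosSemidef ∧ (σ k).trace = 1) ∧
    (∀ k, (τ k).PosSemidef ∧ (τ k).trace = 1) ∧
    ρ = ∑ k, (p k : ℂ) • (σ k ⊗ₖ τ k)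

/-- The `(x,y)`-block of a bipartite matrix. -/
def matBlock {α β : Type*} (ρ : Matrix (α × β) (α × β) ℂ) (x y : α) :
    Matrix β β ℂ :=
  Matrix.of fun j l => ρ (x, j) (y, l)

/-- The graph Laplacian quantum state of a simple graph. -/
def lapState {V : Type*} [Fintype V] [DecidableEq V] (G : SimpleGraph V)
    [DecidableRel G.Adj] : Matrix V V ℂ :=
  ((2 * G.edgeFinset.card : ℂ))⁻¹ • G.lapMatrix ℂ

/-!
Write `e_i` for the standard basis vectors. Twice the Laplacian is `∑ A_vw (e_v - e_w)(e_v - e_w)ᵀ`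
over ordered pairs of vertices. When the adjacency matrix is invariant under the partial transpose,
`A_(u,a),(x,b) = A_(u,b),(x,a)`, so every term may be paired with the one for `(u,b),(x,a)`, and
the polarization identity
`2 [(e_ua - e_xb)(e_ua - e_xb)ᵀ + (e_ub - e_xa)(e_ub - e_xa)ᵀ]
  = (e_u - e_x)(e_u - e_x)ᵀ ⊗ (e_a + e_b)(e_a + e_b)ᵀ
    + (e_u + e_x)(e_u + e_x)ᵀ ⊗ (e_a - e_b)(e_a - e_b)ᵀ`
writes `8 L` as a nonnegative combination of Kronecker products of positive semidefinite matrices.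
Normalizing each factor to trace one exhibits `ρ_G` as a convex combination of product states.
-/

theorem Pi.single_one_prod_apply {α β R : Type*} [DecidableEq α] [DecidableEq β] [Semiring R]
    (v w : α × β) :
    (Pi.single v 1 : α × β → R) w =
      (Pi.single v.1 1 : α → R) w.1 * (Pi.single v.2 1 : β → R) w.2 := by
  simp only [Pi.single_apply, Prod.ext_iff]
  split_ifs <;> simp_all

theorem Fintype.sum_sum_swap_snd {α β M : Type*} [Fintype α] [Fintype β] [AddCommMonoid M]
    (F : α × β → α × β → M) :
    ∑ v : α × β, ∑ w : α × β, F (v.1, w.2) (w.1, v.2) = ∑ v, ∑ w, F v w := by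
  simp only [← Fintype.sum_prod_type']
  exact Equiv.sum_comp (Function.Involutive.toPerm (fun p : (α × β) × (α × β) =>
    ((p.1.1, p.2.2), (p.2.1, p.1.2))) fun _ => rfl) fun p => F p.1 p.2

namespace Matrix

section PartialTranspose

variable {α β R : Type*}

def partialTranspose (M : Matrix (α × β) (α × β) R) : Matrix (α × β) (α × β) R :=
  of fun v w => M (v.1, w.2) (w.1, v.2)

theorem partialTranspose_sub [Sub R] (M N : Matrix (α × β) (α × β) R) :
    (M - N).partialTranspose = M.partialTranspose - N.partialTranspose :=
  rfl

theorem partialTranspose_smul {S : Type*} [SMul S R] (c : S) (M : Matrix (α × β) (α × β) R) :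
    (c • M).partialTranspose = c • M.partialTranspose :=
  rfl

theorem partialTranspose_diagonal [DecidableEq α] [DecidableEq β] [Zero R] (d : α × β → R) :
    (diagonal d).partialTranspose = diagonal d := by
  ext ⟨u, a⟩ ⟨x, b⟩
  simp only [partialTranspose, of_apply, diagonal_apply, Prod.ext_iff]
  grind

end PartialTranspose

theorem posSemidef_vecMulVec_self_of_star_eq {n R : Type*} [Finite n] [Ring R] [PartialOrder R]
    [StarRing R] [StarOrderedRing R] {x : n → R} (hx : star x = x) :
    (vecMulVec x x).PosSemidef := by
  have h := posSemidef_vecMulVec_self_star x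
  rwa [hx] at h

section EdgeLaplacian

variable {n R : Type*} [DecidableEq n] [CommRing R]

def edgeLaplacian (i j : n) : Matrix n n R :=
  vecMulVec (Pi.single i 1 - Pi.single j 1) (Pi.single i 1 - Pi.single j 1)

def edgeSignlessLaplacian (i j : n) : Matrix n n R :=
  vecMulVec (Pi.single i 1 + Pi.single j 1) (Pi.single i 1 + Pi.single j 1)

theorem posSemidef_edgeLaplacian [Finite n] [PartialOrder R] [StarRing R] [StarOrderedRing R]
    (i j : n) : (edgeLaplacian i j : Matrix n n R).PosSemidef :=
  posSemidef_vecMulVec_self_of_star_eq (by simp only [star_sub, Pi.star_single, star_one])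

theorem posSemidef_edgeSignlessLaplacian [Finite n] [PartialOrder R] [StarRing R]
    [StarOrderedRing R] (i j : n) : (edgeSignlessLaplacian i j : Matrix n n R).PosSemidef :=
  posSemidef_vecMulVec_self_of_star_eq (by simp only [star_add, Pi.star_single, star_one])

theorem two_smul_edgeLaplacian_add_edgeLaplacian {α β : Type*} [DecidableEq α] [DecidableEq β]
    (v w : α × β) :
    (2 : R) • (edgeLaplacian v w + edgeLaplacian (v.1, w.2) (w.1, v.2)) =
      (edgeLaplacian v.1 w.1 : Matrix α α R) ⊗ₖ edgeSignlessLaplacian v.2 w.2 +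
        (edgeSignlessLaplacian v.1 w.1 : Matrix α α R) ⊗ₖ edgeLaplacian v.2 w.2 := by
  ext ⟨i, c⟩ ⟨j, d⟩
  simp only [edgeLaplacian, edgeSignlessLaplacian, smul_apply, add_apply, vecMulVec_apply,
    Pi.sub_apply, Pi.add_apply, kroneckerMap_apply, Pi.single_one_prod_apply, smul_eq_mul]
  ring

end EdgeLaplacian

section TraceNormalize

variable {n : Type*} [Fintype n] [DecidableEq n]

/-- The value at trace zero is arbitrary: a positive semidefinite matrix of trace zero vanishes. -/
def traceNormalize (M : Matrix n n ℂ) : Matrix n n ℂ :=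
  if M.trace = 0 then (Fintype.card n : ℂ)⁻¹ • 1 else M.trace⁻¹ • M

theorem isDensityMatrix_inv_card_smul_one [Nonempty n] :
    IsDensityMatrix ((Fintype.card n : ℂ)⁻¹ • (1 : Matrix n n ℂ)) :=
  ⟨PosSemidef.one.smul (by positivity), by simp [trace_smul, trace_one]⟩

theorem PosSemidef.isDensityMatrix_traceNormalize [Nonempty n] {M : Matrix n n ℂ}
    (hM : M.PosSemidef) : IsDensityMatrix M.traceNormalize := by
  unfold traceNormalize
  split_ifs with h
  · exact isDensityMatrix_inv_card_smul_one
  · refine ⟨hM.smul (inv_nonneg.2 hM.trace_nonneg), ?_⟩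
    rw [trace_smul, smul_eq_mul, inv_mul_cancel₀ h]

theorem PosSemidef.trace_smul_traceNormalize {M : Matrix n n ℂ} (hM : M.PosSemidef) :
    M.trace • M.traceNormalize = M := by
  unfold traceNormalize
  split_ifs with h
  · rw [h, zero_smul, hM.trace_eq_zero_iff.1 h]
  · rw [smul_smul, mul_inv_cancel₀ h, one_smul]

end TraceNormalize

end Matrix

namespace Separable

variable {α β : Type*} [Fintype α] [Fintype β]

theorem of_fintype {ι : Type*} [Fintype ι] {ρ : Matrix (α × β) (α × β) ℂ} (p : ι → ℝ)
    (σ : ι → Matrix α α ℂ) (τ : ι → Matrix β β ℂ) (hp : ∀ i, 0 ≤ p i) (hp1 : ∑ i, p i = 1)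
    (hσ : ∀ i, IsDensityMatrix (σ i)) (hτ : ∀ i, IsDensityMatrix (τ i))
    (hρ : ρ = ∑ i, (p i : ℂ) • (σ i ⊗ₖ τ i)) : Separable ρ := by
  let e := (Fintype.equivFin ι).symm
  exact ⟨Fintype.card ι, p ∘ e, σ ∘ e, τ ∘ e, fun _ => hp _, (Equiv.sum_comp e p).trans hp1,
    fun _ => hσ _, fun _ => hτ _,
    hρ.trans (Equiv.sum_comp e fun i => (p i : ℂ) • (σ i ⊗ₖ τ i)).symm⟩

theorem of_eq_sum_kronecker [DecidableEq α] [DecidableEq β] [Nonempty α] [Nonempty β]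
    {ι : Type*} [Fintype ι] {ρ : Matrix (α × β) (α × β) ℂ} (c : ι → ℂ)
    (P : ι → Matrix α α ℂ) (Q : ι → Matrix β β ℂ) (hc : ∀ i, 0 ≤ c i)
    (hP : ∀ i, (P i).PosSemidef) (hQ : ∀ i, (Q i).PosSemidef)
    (hρ : ρ = ∑ i, c i • (P i ⊗ₖ Q i)) (htr : ρ.trace = 1) : Separable ρ := by
  set w : ι → ℂ := fun i => c i * (P i).trace * (Q i).trace
  have hw0 i : 0 ≤ w i := mul_nonneg (mul_nonneg (hc i) (hP i).trace_nonneg) (hQ i).trace_nonneg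
  have hw i : ((w i).re : ℂ) = w i := (Complex.eq_re_of_ofReal_le (hw0 i)).symm
  have hσ i := (hP i).isDensityMatrix_traceNormalize
  have hτ i := (hQ i).isDensityMatrix_traceNormalize
  have hρ' : ρ = ∑ i, ((w i).re : ℂ) • ((P i).traceNormalize ⊗ₖ (Q i).traceNormalize) := by
    refine hρ.trans (Finset.sum_congr rfl fun i _ => ?_)
    conv_lhs => rw [← (hP i).trace_smul_traceNormalize, ← (hQ i).trace_smul_traceNormalize]
    rw [hw, smul_kronecker, kronecker_smul, smul_smul, smul_smul]
  refine of_fintype _ _ _ (fun i => (Complex.nonneg_iff.1 (hw0 i)).1) ?_ hσ hτ hρ'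
  rw [hρ', trace_sum] at htr
  simp only [trace_smul, trace_kronecker, (hσ _).2, (hτ _).2, mul_one, smul_eq_mul] at htr
  exact_mod_cast htr

end Separable

namespace SimpleGraph

section

variable {V R : Type*} [Fintype V] [DecidableEq V] (G : SimpleGraph V) [DecidableRel G.Adj]

theorem trace_lapMatrix [Ring R] : (G.lapMatrix R).trace = 2 * G.edgeFinset.card := by
  simp [lapMatrix, trace_sub, degMatrix, trace_diagonal, trace_adjMatrix, ← Nat.cast_sum,
    sum_degrees_eq_twice_card_edges]

theorem two_smul_lapMatrix_eq_sum_edgeLaplacian [CommRing R] :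
    (2 : R) • G.lapMatrix R = ∑ v, ∑ w, G.adjMatrix R v w • edgeLaplacian v w := by
  ext i j
  simp only [Matrix.sum_apply, Matrix.smul_apply, edgeLaplacian, vecMulVec_apply, Pi.sub_apply,
    Pi.single_apply, smul_eq_mul, mul_sub, Finset.sum_sub_distrib, mul_ite, mul_one, mul_zero]
  simp only [Finset.sum_ite_eq, Finset.mem_univ, if_true]
  by_cases h : i = j
  · subst h
    simp [lapMatrix, degMatrix, degree, neighborFinset_eq_filter, G.adj_comm, two_mul]
  · by_cases hij : G.Adj i j <;> norm_num [lapMatrix, degMatrix, h, hij, G.adj_comm]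

end

variable {α β R : Type*} [Fintype α] [Fintype β] [DecidableEq α] [DecidableEq β]
  (G : SimpleGraph (α × β)) [DecidableRel G.Adj]

theorem adjMatrix_partialTranspose_of_lapMatrix [Ring R]
    (h : (G.lapMatrix R).partialTranspose = G.lapMatrix R) :
    (G.adjMatrix R).partialTranspose = G.adjMatrix R := by
  rw [← sub_sub_cancel (G.degMatrix R) (G.adjMatrix R), ← lapMatrix, partialTranspose_sub, h,
    degMatrix, partialTranspose_diagonal]

theorem eight_smul_lapMatrix_eq_sum_kronecker [CommRing R]
    (h : (G.adjMatrix R).partialTranspose = G.adjMatrix R) :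
    (8 : R) • G.lapMatrix R = ∑ v : α × β, ∑ w : α × β, G.adjMatrix R v w •
      ((edgeLaplacian v.1 w.1 : Matrix α α R) ⊗ₖ edgeSignlessLaplacian v.2 w.2 +
        (edgeSignlessLaplacian v.1 w.1 : Matrix α α R) ⊗ₖ edgeLaplacian v.2 w.2) := by
  have hswap : (2 : R) • G.lapMatrix R =
      ∑ v : α × β, ∑ w : α × β, G.adjMatrix R v w • edgeLaplacian (v.1, w.2) (w.1, v.2) := by
    rw [two_smul_lapMatrix_eq_sum_edgeLaplacian, ← Fintype.sum_sum_swap_snd]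
    refine Finset.sum_congr rfl fun v _ => Finset.sum_congr rfl fun w _ => ?_
    exact congrArg (· • _) (congrFun₂ h v w)
  calc (8 : R) • G.lapMatrix R
      = (2 : R) • ((2 : R) • G.lapMatrix R + (2 : R) • G.lapMatrix R) := by
        rw [smul_add, smul_smul, ← add_smul]; norm_num
    _ = _ := by
      nth_rw 1 [two_smul_lapMatrix_eq_sum_edgeLaplacian]
      rw [hswap]
      simp only [← Finset.sum_add_distrib, Finset.smul_sum, ← smul_add]
      refine Finset.sum_congr rfl fun v _ => Finset.sum_congr rfl fun w _ => ?_
      rw [smul_comm, two_smul_edgeLaplacian_add_edgeLaplacian]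

end SimpleGraph

theorem trace_lapState {V : Type*} [Fintype V] [DecidableEq V] (G : SimpleGraph V)
    [DecidableRel G.Adj] (hE : G.edgeFinset.Nonempty) : (lapState G).trace = 1 := by
  have hm : (2 * G.edgeFinset.card : ℂ) ≠ 0 := by
    have := hE.card_pos
    positivity
  rw [lapState, trace_smul, G.trace_lapMatrix, smul_eq_mul, inv_mul_cancel₀ hm]

section LapState

variable {α β : Type*} [Fintype α] [Fintype β] [DecidableEq α] [DecidableEq β]
  (G : SimpleGraph (α × β)) [DecidableRel G.Adj]

theorem lapMatrix_partialTranspose_of_lapState (hE : G.edgeFinset.Nonempty)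
    (h : (lapState G).partialTranspose = lapState G) :
    (G.lapMatrix ℂ).partialTranspose = G.lapMatrix ℂ := by
  have hm : (2 * G.edgeFinset.card : ℂ)⁻¹ ≠ 0 := by
    have := hE.card_pos
    positivity
  rw [lapState, partialTranspose_smul] at h
  exact smul_right_injective _ hm h

theorem lapState_eq_sum_kronecker (h : (G.adjMatrix ℂ).partialTranspose = G.adjMatrix ℂ) :
    lapState G = ∑ v : α × β, ∑ w : α × β,
      ((16 * G.edgeFinset.card : ℂ)⁻¹ * G.adjMatrix ℂ v w) •
        ((edgeLaplacian v.1 w.1 : Matrix α α ℂ) ⊗ₖ edgeSignlessLaplacian v.2 w.2 +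
          (edgeSignlessLaplacian v.1 w.1 : Matrix α α ℂ) ⊗ₖ edgeLaplacian v.2 w.2) := by
  have h8 : lapState G = (16 * G.edgeFinset.card : ℂ)⁻¹ • ((8 : ℂ) • G.lapMatrix ℂ) := by
    rw [lapState, smul_smul]
    congr 1
    ring
  simp only [h8, G.eight_smul_lapMatrix_eq_sum_kronecker h, Finset.smul_sum, smul_smul]

theorem separable_lapState_of_partialTranspose_eq [Nonempty α] [Nonempty β]
    (hE : G.edgeFinset.Nonempty) (h : (lapState G).partialTranspose = lapState G) :
    Separable (lapState G) := by
  let c : (α × β) × (α × β) → ℂ := fun p =>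
    (16 * G.edgeFinset.card : ℂ)⁻¹ * G.adjMatrix ℂ p.1 p.2
  have hc p : 0 ≤ c p :=
    mul_nonneg (by positivity) (by rw [SimpleGraph.adjMatrix_apply]; split_ifs <;> simp)
  refine Separable.of_eq_sum_kronecker (Sum.elim c c)
    (Sum.elim (fun p => edgeLaplacian p.1.1 p.2.1) (fun p => edgeSignlessLaplacian p.1.1 p.2.1))
    (Sum.elim (fun p => edgeSignlessLaplacian p.1.2 p.2.2) (fun p => edgeLaplacian p.1.2 p.2.2))
    (Sum.forall.2 ⟨hc, hc⟩)
    (Sum.forall.2 ⟨fun _ => posSemidef_edgeLaplacian _ _,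
      fun _ => posSemidef_edgeSignlessLaplacian _ _⟩)
    (Sum.forall.2 ⟨fun _ => posSemidef_edgeSignlessLaplacian _ _,
      fun _ => posSemidef_edgeLaplacian _ _⟩)
    ?_ (trace_lapState G hE)
  rw [lapState_eq_sum_kronecker G (G.adjMatrix_partialTranspose_of_lapMatrix
    (lapMatrix_partialTranspose_of_lapState G hE h)), Fintype.sum_sum_type]
  simp only [Sum.elim_inl, Sum.elim_inr, smul_add, Finset.sum_add_distrib, c,
    Fintype.sum_prod_type]

end LapState

theorem partial_transpose_symmetric_qubit_state_separable
    {W : Type*} [Fintype W] [DecidableEq W] [Nonempty W]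
    (G : SimpleGraph (W × Fin 2)) [DecidableRel G.Adj]
    (hE : G.edgeFinset.Nonempty)
    (hsym : ∀ (u w : W) (a b : Fin 2),
      lapState G (u, a) (w, b) = lapState G (u, b) (w, a)) :
    Separable (lapState G) := by
  refine separable_lapState_of_partialTranspose_eq G hE ?_
  ext v w
  exact (hsym v.1 w.1 v.2 w.2).symm
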